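/- arXiv:2005.08964 — 8 statements merged into one kernel-verified Lean document; each statement's English description precedes it below -/
import Mathlib

section
/- Let (T,M) be a complete local Noetherian ring and (S, S ∩ M) a local domain with S ⊆ T whose completion is T. If R is a subring of T containing S such that every element r of R ∩ M can be written as r = c·d where c ∈ S ∩ M and d is a unit of T, then R is an integral domain. -/
/-- For a ring hom `f : R →+* S` and an ideal `M` of `S`, the `n`-th power of the
contraction of `M` is contained in the contraction of `M ^ n`. -/
lemma pow_comap_le_comap_pow {R S : Type*} [CommRing R] [CommRing S] (f : R →+* S)
    (M : Ideal S) (n : ℕ) : (M.comap f) ^ n ≤ (M ^ n).comap f := by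
  rw [← Ideal.map_le_iff_le_comap, Ideal.map_pow]
  exact Ideal.pow_right_mono Ideal.map_comap_le n

/-- `S` is a subring of `T` whose (`M ∩ S`)-adic completion maps isomorphically onto the
`M`-adically complete ring `T`: i.e. `T` is `M`-adically complete and for every `n` the
natural map `S ⧸ (M ∩ S)^n → T ⧸ M^n` is bijective.  This says exactly that the natural
map `Ŝ → T` is an isomorphism, i.e. "the completion of `S` is `T`". -/
def HasCompletion {T : Type*} [CommRing T] (M : Ideal T) (S : Subring T) : Prop :=
  IsAdicComplete M T ∧ ∀ n : ℕ,
    Function.Bijective (Ideal.quotientMap (M ^ n) S.subtype (pow_comap_le_comap_pow _ M n))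

/-- Lemma 3.3: if every element of `R ∩ M` factors as `c * d` with `c ∈ S ∩ M` and `d` a
unit of `T`, then the `S`-subring `R` is an integral domain. -/
theorem stmt0 {T : Type*} [CommRing T] [IsNoetherianRing T] [IsLocalRing T]
    (M : Ideal T) (hM : M = IsLocalRing.maximalIdeal T)
    (hTcomplete : IsAdicComplete M T)
    (S : Subring T) [IsDomain S] [IsNoetherianRing S] [IsLocalRing S]
    (hSmax : IsLocalRing.maximalIdeal S = M.comap S.subtype)
    (hScomp : HasCompletion M S)
    (R : Subring T) (hSR : S ≤ R)
    (hfact : ∀ r ∈ R, r ∈ M → ∃ c ∈ S, c ∈ M ∧ ∃ d : Tˣ, r = c * (d : T)) :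
    IsDomain R := by
  obtain ⟨-, hbij⟩ := hScomp
  set m' : Ideal S := M.comap S.subtype with hm'
  -- key fact: nonzero elements of `S` are nonzerodivisors in `T`.
  have key : ∀ s : S, s ≠ 0 → ∀ t : T, (s : T) * t = 0 → t = 0 := by
    intro s hs t hst
    obtain ⟨k, hk⟩ := Ideal.exists_pow_inf_eq_pow_smul m' (Ideal.span {s})
    have htM : ∀ j : ℕ, t ∈ M ^ j := by
      intro j
      -- choose an approximation of `t` from `S` modulo `M ^ (j + k)`
      obtain ⟨x', hx'⟩ := (hbij (j + k)).2 (Ideal.Quotient.mk (M ^ (j + k)) t)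
      obtain ⟨x, rfl⟩ := Ideal.Quotient.mk_surjective x'
      rw [Ideal.quotientMap_mk, Ideal.Quotient.eq] at hx'
      -- then `s * x ∈ M ^ (j+k) ∩ S = m' ^ (j+k)`
      have hsx : (s * x : S) ∈ m' ^ (j + k) := by
        have h1 : ((s * x : S) : T) ∈ M ^ (j + k) := by
          have : ((s * x : S) : T) = (s : T) * ((x : T) - t) + (s : T) * t := by
            push_cast; ring
          rw [this, hst, add_zero]
          exact Ideal.mul_mem_left _ _ hx'
        -- injectivity of the quotient map
        have h2 := (hbij (j + k)).1 (a₁ := Ideal.Quotient.mk _ (s * x)) (a₂ := 0)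
        rw [← Ideal.Quotient.eq_zero_iff_mem]
        apply h2
        rw [map_zero, Ideal.quotientMap_mk, Ideal.Quotient.eq_zero_iff_mem]
        exact h1
      -- Artin–Rees: `x ∈ m' ^ j`
      have hx : x ∈ m' ^ j := by
        have hmem : (s * x : S) ∈ m' ^ (j + k) • ⊤ ⊓ Ideal.span {s} := by
          refine ⟨?_, Ideal.mem_span_singleton.2 (dvd_mul_right s x)⟩
          rw [Ideal.smul_eq_mul, Ideal.mul_top]
          exact hsx
        rw [hk (j + k) le_add_self] at hmem
        have hmem' : (s * x : S) ∈ m' ^ (j + k - k) • Ideal.span {s} :=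
          Submodule.smul_mono le_rfl inf_le_right hmem
        rw [Nat.add_sub_cancel] at hmem'
        obtain ⟨a, haI, ha⟩ := Submodule.mem_smul_span_singleton.1 hmem'
        have : a = x := by
          have := mul_left_cancel₀ hs (by rw [← ha, smul_eq_mul, mul_comm] : (s : S) * a = s * x)
          exact this
        exact this ▸ haI
      -- hence `t ∈ M ^ j`
      have hxT : (x : T) ∈ M ^ j := pow_comap_le_comap_pow S.subtype M j hx
      have : t = (x : T) - ((x : T) - t) := by ring
      rw [this]
      exact Ideal.sub_mem _ hxT (Ideal.pow_le_pow_right (Nat.le_add_right j k) hx')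
    -- Hausdorffness of `T` finishes
    refine hTcomplete.toIsHausdorff.haus t fun n => ?_
    rw [SModEq.zero, Ideal.smul_eq_mul, Ideal.mul_top]
    exact htM n
  have hnontriv : Nontrivial R := ⟨0, 1, fun h => zero_ne_one (congrArg Subtype.val h)⟩
  have : NoZeroDivisors R := by
    constructor
    intro a b hab
    have habT : (a : T) * (b : T) = 0 := by
      have := congrArg Subtype.val hab
      simpa using this
    by_cases haM : (a : T) ∈ M
    · obtain ⟨c, hcS, hcM, d, hd⟩ := hfact (a : T) a.2 haM
      by_cases hc : c = 0
      · left
        apply Subtype.ext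
        simp [hd, hc]
      · right
        have h0 : c * ((d : T) * (b : T)) = 0 := by
          rw [← mul_assoc, ← hd]; exact habT
        have hdb : (d : T) * (b : T) = 0 :=
          key ⟨c, hcS⟩ (fun h => hc (congrArg Subtype.val h)) _ h0
        have : (b : T) = 0 := by
          have := d.isUnit.mul_right_eq_zero.1 hdb
          exact this
        exact Subtype.ext this
    · right
      have hu : IsUnit (a : T) := by
        by_contra hnu
        exact haM (hM ▸ IsLocalRing.mem_maximalIdeal _ |>.2 hnu)
      exact Subtype.ext (hu.mul_right_eq_zero.1 habT)
  exact NoZeroDivisors.to_isDomain R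
end

section
/- Let (T,M) be a complete local Noetherian ring, and suppose (S, S ∩ M) and (B, B ∩ M) are Noetherian local domains with S ⊆ B ⊆ T, both having completion T, and such that every ideal of B is generated by elements of S. Then the map φ : Spec(B) → Spec(S) given by P ↦ P ∩ S is an order isomorphism of partially ordered sets (ordered by inclusion). -/
section Aux

variable {T : Type*} [CommRing T] (M : Ideal T) (S : Subring T)

/-- From surjectivity of `S ⧸ (M ∩ S)^n → T ⧸ M^n`: every element of `T` can be
approximated modulo `M ^ n` by an element of `S`. -/
lemma HasCompletion.exists_sub_mem (h : HasCompletion M S) (n : ℕ) (t : T) :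
    ∃ s : S, t - s ∈ M ^ n := by
  obtain ⟨y, hy⟩ := (h.2 n).2 (Ideal.Quotient.mk _ t)
  obtain ⟨s, rfl⟩ := Ideal.Quotient.mk_surjective y
  rw [Ideal.quotientMap_mk] at hy
  refine ⟨s, ?_⟩
  have := Ideal.Quotient.eq.mp hy
  simpa using (M ^ n).neg_mem this

/-- From injectivity of `S ⧸ (M ∩ S)^n → T ⧸ M^n`: the contraction of `M ^ n`
is contained in the `n`-th power of the contraction of `M`. -/
lemma HasCompletion.comap_pow_le (h : HasCompletion M S) (n : ℕ) :
    (M ^ n).comap S.subtype ≤ (M.comap S.subtype) ^ n := by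
  intro x hx
  have h0 : Ideal.quotientMap (M ^ n) S.subtype (pow_comap_le_comap_pow _ M n)
      (Ideal.Quotient.mk _ x) = Ideal.quotientMap (M ^ n) S.subtype
        (pow_comap_le_comap_pow _ M n) (Ideal.Quotient.mk _ 0) := by
    rw [Ideal.quotientMap_mk, Ideal.quotientMap_mk]
    rw [Ideal.Quotient.eq]
    simpa using hx
  have := (h.2 n).1 h0
  rw [Ideal.Quotient.eq] at this
  simpa using this

/-- Elements of the extension `I·T` are approximated modulo `M ^ n` by elements of `I`. -/
lemma HasCompletion.exists_approx (h : HasCompletion M S) (I : Ideal S) (n : ℕ) :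
    ∀ t ∈ I.map S.subtype, ∃ s ∈ I, t - s ∈ M ^ n := by
  intro t ht
  have ht' : t ∈ Ideal.span (S.subtype '' I) := ht
  refine Submodule.span_induction ?_ ?_ ?_ ?_ ht'
  · rintro _ ⟨a, ha, rfl⟩
    exact ⟨a, ha, by simp⟩
  · exact ⟨0, I.zero_mem, by simp⟩
  · rintro x y _ _ ⟨s₁, hs₁, hm₁⟩ ⟨s₂, hs₂, hm₂⟩
    refine ⟨s₁ + s₂, I.add_mem hs₁ hs₂, ?_⟩
    have := (M ^ n).add_mem hm₁ hm₂
    convert this using 1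
    push_cast
    ring
  · rintro r x _ ⟨s, hs, hm⟩
    obtain ⟨s', hs'⟩ := h.exists_sub_mem M S n r
    refine ⟨s' * s, I.mul_mem_left s' hs, ?_⟩
    have h1 : r * (x - (s : T)) ∈ M ^ n := (M ^ n).mul_mem_left r hm
    have h2 : (r - (s' : T)) * (s : T) ∈ M ^ n := (M ^ n).mul_mem_right _ hs'
    have := (M ^ n).add_mem h1 h2
    rw [smul_eq_mul]
    convert this using 1
    push_cast
    ring

set_option synthInstance.maxHeartbeats 1000000 in
/-- Key lemma: for a proper ideal `I` of `S`, the contraction of `I·T` back to `S` is `I`. -/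
lemma comap_map_eq [IsNoetherianRing S] [IsLocalRing S]
    (hSmax : IsLocalRing.maximalIdeal S = M.comap S.subtype)
    (h : HasCompletion M S) (I : Ideal S) (hI : I ≠ ⊤) :
    (I.map S.subtype).comap S.subtype = I := by
  refine le_antisymm ?_ Ideal.le_comap_map
  intro x hx
  have key : ∀ n : ℕ, x ∈ I ⊔ (IsLocalRing.maximalIdeal S) ^ n := by
    intro n
    obtain ⟨s, hs, hm⟩ := h.exists_approx M S I n _ hx
    have hms : ((x - s : S) : T) ∈ M ^ n := by push_cast; exact hm
    have hx' : x - s ∈ (M.comap S.subtype) ^ n := h.comap_pow_le M S n hms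
    rw [hSmax]
    have : x = s + (x - s) := by ring
    rw [this]
    exact Submodule.add_mem_sup hs hx'
  -- now use Krull intersection in the quotient `S ⧸ I`
  haveI := Ideal.Quotient.nontrivial_iff.mpr hI
  haveI : IsLocalRing (S ⧸ I) :=
    IsLocalRing.of_surjective' (Ideal.Quotient.mk I) Ideal.Quotient.mk_surjective
  haveI : IsNoetherianRing (S ⧸ I) :=
    isNoetherianRing_of_surjective _ _ (Ideal.Quotient.mk I) Ideal.Quotient.mk_surjective
  set π := Ideal.Quotient.mk I
  set m' : Ideal (S ⧸ I) := (IsLocalRing.maximalIdeal S).map π with hm'def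
  have hm' : m' ≠ ⊤ := by
    have hle : m' ≤ IsLocalRing.maximalIdeal (S ⧸ I) := by
      rw [hm'def, Ideal.map_le_iff_le_comap]
      have hmax := Ideal.comap_isMaximal_of_surjective (K := IsLocalRing.maximalIdeal (S ⧸ I))
        π Ideal.Quotient.mk_surjective
      rw [IsLocalRing.eq_maximalIdeal hmax]
    exact fun hcon => (IsLocalRing.maximalIdeal.isMaximal (S ⧸ I)).ne_top
      (top_le_iff.mp (hcon ▸ hle))
  have hbot := Ideal.iInf_pow_eq_bot_of_isLocalRing m' hm'
  have hmem : π x ∈ ⨅ n : ℕ, m' ^ n := by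
    rw [Submodule.mem_iInf]
    intro n
    have := Ideal.mem_map_of_mem π (key n)
    rwa [Ideal.map_sup, Ideal.map_quotient_self, bot_sup_eq, Ideal.map_pow] at this
  rw [hbot] at hmem
  exact Ideal.Quotient.eq_zero_iff_mem.mp hmem

/-- Lying over for `S ⊆ T`: every prime of `S` is the contraction of a prime of `T`. -/
lemma exists_isPrime_comap_eq [IsNoetherianRing S] [IsLocalRing S]
    (hSmax : IsLocalRing.maximalIdeal S = M.comap S.subtype)
    (h : HasCompletion M S) (q : Ideal S) [hq : q.IsPrime] :
    ∃ Q : Ideal T, Q.IsPrime ∧ Q.comap S.subtype = q := by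
  have hcm := comap_map_eq M S hSmax h q hq.ne_top
  set mult : Submonoid T := q.primeCompl.map S.subtype.toMonoidHom with hmult
  have hdisj : Disjoint ((q.map S.subtype : Ideal T) : Set T) (mult : Set T) := by
    rw [Set.disjoint_left]
    rintro t ht ⟨s, hs, rfl⟩
    exact hs (hcm ▸ (Ideal.mem_comap.mpr ht))
  obtain ⟨Q, hQp, hle, hdisj'⟩ := Ideal.exists_le_prime_disjoint _ mult hdisj
  refine ⟨Q, hQp, le_antisymm ?_ (Ideal.map_le_iff_le_comap.mp hle)⟩
  intro s hs
  by_contra hns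
  exact Set.disjoint_left.mp hdisj' hs ⟨s, hns, rfl⟩

end Aux

/-- Proposition 4.1: if `S ⊆ B ⊆ T` are Noetherian local domains with common completion
`T` and every ideal of `B` is generated by elements of `S`, then
`P ↦ P ∩ S` is an order isomorphism `Spec B → Spec S`. -/
theorem stmt4 {T : Type*} [CommRing T] [IsNoetherianRing T] [IsLocalRing T]
    (M : Ideal T) (hM : M = IsLocalRing.maximalIdeal T)
    (S B : Subring T) (hSB : S ≤ B)
    [IsDomain S] [IsNoetherianRing S] [IsLocalRing S]
    [IsDomain B] [IsNoetherianRing B] [IsLocalRing B]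
    (hSmax : IsLocalRing.maximalIdeal S = M.comap S.subtype)
    (hBmax : IsLocalRing.maximalIdeal B = M.comap B.subtype)
    (hScomp : HasCompletion M S) (hBcomp : HasCompletion M B)
    (hext : ∀ I : Ideal B, ∃ G : Set B,
      G ⊆ Set.range (Subring.inclusion hSB) ∧ I = Ideal.span G) :
    Function.Bijective (PrimeSpectrum.comap (Subring.inclusion hSB)) ∧
      ∀ P Q : PrimeSpectrum B, P ≤ Q ↔
        PrimeSpectrum.comap (Subring.inclusion hSB) P ≤
          PrimeSpectrum.comap (Subring.inclusion hSB) Q := by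
  -- Every ideal of `B` is its own extension of its contraction to `S`.
  have hPmap : ∀ P : Ideal B,
      Ideal.map (Subring.inclusion hSB) (P.comap (Subring.inclusion hSB)) = P := by
    intro P
    obtain ⟨G, hG, hspan⟩ := hext P
    refine le_antisymm Ideal.map_comap_le ?_
    rw [hspan, Ideal.span_le]
    intro g hg
    obtain ⟨s, rfl⟩ := hG hg
    exact Ideal.mem_map_of_mem _ (Ideal.mem_comap.mpr (Ideal.subset_span hg))
  -- the order characterization
  have horder : ∀ P Q : PrimeSpectrum B, P ≤ Q ↔
      PrimeSpectrum.comap (Subring.inclusion hSB) P ≤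
        PrimeSpectrum.comap (Subring.inclusion hSB) Q := by
    intro P Q
    constructor
    · intro h
      exact Ideal.comap_mono h
    · intro h
      calc P.asIdeal = Ideal.map (Subring.inclusion hSB)
            (P.asIdeal.comap (Subring.inclusion hSB)) := (hPmap _).symm
        _ ≤ Ideal.map (Subring.inclusion hSB)
            (Q.asIdeal.comap (Subring.inclusion hSB)) := Ideal.map_mono h
        _ = Q.asIdeal := hPmap _
  refine ⟨⟨?_, ?_⟩, horder⟩
  · -- injectivity
    intro P Q h
    have h1 : PrimeSpectrum.comap (Subring.inclusion hSB) P ≤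
        PrimeSpectrum.comap (Subring.inclusion hSB) Q := le_of_eq h
    have h2 : PrimeSpectrum.comap (Subring.inclusion hSB) Q ≤
        PrimeSpectrum.comap (Subring.inclusion hSB) P := le_of_eq h.symm
    exact le_antisymm ((horder P Q).mpr h1) ((horder Q P).mpr h2)
  · -- surjectivity
    intro q
    haveI := q.isPrime
    obtain ⟨Q, hQp, hQ⟩ := exists_isPrime_comap_eq M S hSmax hScomp q.asIdeal
    refine ⟨PrimeSpectrum.comap B.subtype ⟨Q, hQp⟩, ?_⟩
    have hcomp : B.subtype.comp (Subring.inclusion hSB) = S.subtype := by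
      ext s; rfl
    apply PrimeSpectrum.ext
    show (Q.comap B.subtype).comap (Subring.inclusion hSB) = q.asIdeal
    rw [Ideal.comap_comap, hcomp, hQ]
end

section
/- Let (T,M) be a complete local Noetherian ring, and suppose (S, S ∩ M) and (B, B ∩ M) are Noetherian local domains with S ⊆ B ⊆ T, both with completion T, such that every ideal of B is extended from S. If S is a unique factorization domain, then B is a unique factorization domain. -/
/-- An irreducible element dividing a product of primes is associated to one of them. -/
private lemma irred_assoc_of_dvd_prod {α : Type*} [CommMonoidWithZero α] [IsCancelMulZero α] {q : α}
    (hq : Irreducible q) :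
    ∀ f : Multiset α, (∀ p ∈ f, Prime p) → q ∣ f.prod → ∃ p ∈ f, Associated q p := by
  intro f
  induction f using Multiset.induction_on with
  | empty =>
    intro _ hdvd
    rw [Multiset.prod_zero] at hdvd
    exact absurd (isUnit_of_dvd_one hdvd) hq.not_isUnit
  | cons p f ih =>
    intro hf hdvd
    have hp : Prime p := hf p (Multiset.mem_cons_self _ _)
    rw [Multiset.prod_cons] at hdvd
    obtain ⟨c, hc⟩ := hdvd
    have hpqc : p ∣ q * c := ⟨f.prod, hc.symm⟩
    rcases hp.2.2 q c hpqc with hpq | hpc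
    · obtain ⟨d, hd⟩ := hpq
      rcases hq.isUnit_or_isUnit hd with hu | hu
      · exact absurd hu hp.not_unit
      · refine ⟨p, Multiset.mem_cons_self _ _, ?_⟩
        exact (Associated.symm ⟨hu.unit, by rw [IsUnit.unit_spec, ← hd]⟩)
    · obtain ⟨d, hd⟩ := hpc
      have hcancel : f.prod = q * d := by
        have h6 : p * f.prod = p * (q * d) := by
          rw [hc, hd, mul_left_comm]
        exact mul_left_cancel₀ hp.ne_zero h6
      obtain ⟨r, hr, ha⟩ := ih (fun x hx => hf x (Multiset.mem_cons_of_mem hx)) ⟨d, hcancel⟩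
      exact ⟨r, Multiset.mem_cons_of_mem hr, ha⟩

/-- Krull intersection: in a Noetherian local ring, an element lying in `J + m^n` for
all `n` lies in `J`. -/
private lemma mem_of_forall_mem_sup_pow {R : Type*} [CommRing R] [IsNoetherianRing R]
    [IsLocalRing R] {J : Ideal R} {s : R}
    (h : ∀ n : ℕ, s ∈ J ⊔ (IsLocalRing.maximalIdeal R) ^ n) : s ∈ J := by
  by_cases hJ : J = ⊤
  · rw [hJ]; trivial
  have hle : J ≤ IsLocalRing.maximalIdeal R := IsLocalRing.le_maximalIdeal hJ
  have hnt : Nontrivial (R ⧸ J) := Ideal.Quotient.nontrivial_iff.mpr hJ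
  have hsurj : Function.Surjective (Ideal.Quotient.mk J) := Ideal.Quotient.mk_surjective
  have hloc : IsLocalRing (R ⧸ J) := IsLocalRing.of_surjective' _ hsurj
  set π := Ideal.Quotient.mk J with hπ
  set m' : Ideal (R ⧸ J) := (IsLocalRing.maximalIdeal R).map π with hm'def
  have hm' : m' ≠ ⊤ := by
    intro htop
    have hcm : Ideal.comap π m' = (IsLocalRing.maximalIdeal R) ⊔ Ideal.comap π ⊥ :=
      Ideal.comap_map_of_surjective π hsurj _
    rw [htop, Ideal.comap_top] at hcm
    have hker : Ideal.comap π (⊥ : Ideal (R ⧸ J)) = J := by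
      rw [← RingHom.ker_eq_comap_bot, Ideal.mk_ker]
    rw [hker, sup_eq_left.mpr hle] at hcm
    exact (IsLocalRing.maximalIdeal.isMaximal R).ne_top hcm.symm
  have hbot : (⨅ n : ℕ, m' ^ n) = ⊥ := Ideal.iInf_pow_eq_bot_of_isLocalRing _ hm'
  have hmem : π s ∈ ⨅ n : ℕ, m' ^ n := by
    rw [Submodule.mem_iInf]
    intro n
    have h1 : π s ∈ (J ⊔ (IsLocalRing.maximalIdeal R) ^ n).map π :=
      Ideal.mem_map_of_mem _ (h n)
    rwa [Ideal.map_sup, Ideal.map_pow, Ideal.map_quotient_self, bot_sup_eq] at h1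
  rw [hbot, Submodule.mem_bot] at hmem
  rwa [← Ideal.Quotient.eq_zero_iff_mem]

/-- If `S ⊆ B ⊆ T` are Noetherian local domains with common completion `T`, every ideal
of `B` is extended from `S`, and `S` is a UFD, then `B` is a UFD. -/
theorem stmt6 {T : Type*} [CommRing T] [IsNoetherianRing T] [IsLocalRing T]
    (M : Ideal T) (hM : M = IsLocalRing.maximalIdeal T)
    (S B : Subring T) (hSB : S ≤ B)
    [IsDomain S] [IsNoetherianRing S] [IsLocalRing S]
    [IsDomain B] [IsNoetherianRing B] [IsLocalRing B]
    (hSmax : IsLocalRing.maximalIdeal S = M.comap S.subtype)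
    (hBmax : IsLocalRing.maximalIdeal B = M.comap B.subtype)
    (hScomp : HasCompletion M S) (hBcomp : HasCompletion M B)
    (hext : ∀ I : Ideal B, ∃ G : Set B,
      G ⊆ Set.range (Subring.inclusion hSB) ∧ I = Ideal.span G)
    (hSufd : UniqueFactorizationMonoid S) :
    UniqueFactorizationMonoid B := by
  classical
  haveI := hSufd
  set ι : S →+* B := Subring.inclusion hSB with hι
  have hSsub : B.subtype.comp ι = S.subtype := by ext x; rfl
  -- contraction of extension is the identity (uses the completion hypothesis for S)
  have hce : ∀ J : Ideal S, (J.map ι).comap ι = J := by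
    intro J
    refine le_antisymm ?_ Ideal.le_comap_map
    intro s hs
    rw [Ideal.mem_comap] at hs
    have hsT : S.subtype s ∈ J.map S.subtype := by
      have h1 : B.subtype (ι s) ∈ (J.map ι).map B.subtype := Ideal.mem_map_of_mem _ hs
      rwa [Ideal.map_map, hSsub] at h1
    have key : ∀ n : ℕ, s ∈ J ⊔ (M.comap S.subtype) ^ n := by
      intro n
      have hφ := hScomp.2 n
      set φ := Ideal.quotientMap (M ^ n) S.subtype (pow_comap_le_comap_pow _ M n) with hφdef
      have hcomm : (Ideal.Quotient.mk (M ^ n)).comp S.subtype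
          = φ.comp (Ideal.Quotient.mk ((M.comap S.subtype) ^ n)) := by
        ext x
        simp [hφdef, Ideal.quotientMap_mk]
      have h2 : Ideal.Quotient.mk (M ^ n) (S.subtype s)
          ∈ (J.map S.subtype).map (Ideal.Quotient.mk (M ^ n)) :=
        Ideal.mem_map_of_mem _ hsT
      rw [Ideal.map_map, hcomm, ← Ideal.map_map] at h2
      have h3 : Ideal.Quotient.mk (M ^ n) (S.subtype s)
          = φ (Ideal.Quotient.mk ((M.comap S.subtype) ^ n) s) :=
        (Ideal.quotientMap_mk).symm
      rw [h3] at h2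
      have h4 : Ideal.Quotient.mk ((M.comap S.subtype) ^ n) s
          ∈ J.map (Ideal.Quotient.mk ((M.comap S.subtype) ^ n)) := by
        have h5 := Ideal.mem_comap.mpr h2
        rwa [Ideal.comap_map_of_bijective φ hφ] at h5
      obtain ⟨x, hxJ, hx⟩ :=
        (Ideal.mem_map_iff_of_surjective _ Ideal.Quotient.mk_surjective).mp h4
      have hsx : s - x ∈ (M.comap S.subtype) ^ n := by
        have := Ideal.Quotient.eq.mp hx
        simpa using neg_mem this
      have hsum : s = x + (s - x) := by ring
      rw [hsum]
      exact Ideal.add_mem _ (Ideal.mem_sup_left hxJ) (Ideal.mem_sup_right hsx)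
    refine mem_of_forall_mem_sup_pow (fun n => ?_)
    rw [hSmax]
    exact key n
  -- extension of contraction is the identity (uses `hext`)
  have hec : ∀ I : Ideal B, (I.comap ι).map ι = I := by
    intro I
    obtain ⟨G, hGS, rfl⟩ := hext I
    refine le_antisymm Ideal.map_comap_le ?_
    rw [Ideal.span_le]
    intro g hg
    obtain ⟨s, rfl⟩ := hGS hg
    exact Ideal.mem_map_of_mem _ (Ideal.mem_comap.mpr (Ideal.subset_span hg))
  -- contraction is multiplicative
  have hcm : ∀ I₁ I₂ : Ideal B, (I₁ * I₂).comap ι = I₁.comap ι * I₂.comap ι := by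
    intro I₁ I₂
    conv_lhs => rw [← hec I₁, ← hec I₂]
    rw [← Ideal.map_mul, hce]
  -- extension of a prime ideal is prime
  have hmp : ∀ Q : Ideal S, Q.IsPrime → (Q.map ι).IsPrime := by
    intro Q hQ
    constructor
    · intro htop
      have h1 := hce Q
      rw [htop, Ideal.comap_top] at h1
      exact hQ.ne_top h1.symm
    · intro a b hab
      have h1 : (Ideal.span {a} * Ideal.span {b}).comap ι ≤ Q := by
        rw [Ideal.span_singleton_mul_span_singleton]
        calc (Ideal.span {a * b}).comap ι ≤ (Q.map ι).comap ι :=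
              Ideal.comap_mono (Ideal.span_le.mpr (by simpa using hab))
          _ = Q := hce Q
      rw [hcm] at h1
      rcases hQ.mul_le.mp h1 with h | h
      · left
        have h2 := Ideal.map_mono (f := ι) h
        rw [hec] at h2
        exact h2 (Ideal.mem_span_singleton_self a)
      · right
        have h2 := Ideal.map_mono (f := ι) h
        rw [hec] at h2
        exact h2 (Ideal.mem_span_singleton_self b)
  -- prime elements of S stay prime in B
  have hinj : Function.Injective ι := by
    intro x y hxy
    have h : ((ι x : B) : T) = ((ι y : B) : T) := congrArg Subtype.val hxy
    exact Subtype.ext h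
  have hpe : ∀ p : S, Prime p → Prime (ι p) := by
    intro p hp
    have hsp : (Ideal.span {ι p} : Ideal B).IsPrime := by
      rw [← Set.image_singleton, ← Ideal.map_span]
      exact hmp _ ((Ideal.span_singleton_prime hp.ne_zero).mpr hp)
    have hne : ι p ≠ 0 := by
      intro h0
      exact hp.ne_zero (hinj (by rw [h0, map_zero]))
    exact (Ideal.span_singleton_prime hne).mp hsp
  -- conclude: B is Noetherian, so WfDvdMonoid; show irreducible → prime
  haveI hwf : WfDvdMonoid B := IsNoetherianRing.wfDvdMonoid
  refine { hwf with
           irreducible_iff_prime := fun {q} => ⟨fun hq => ?_, Prime.irreducible⟩ }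
  have hq0 : q ≠ 0 := hq.ne_zero
  have hJ : (Ideal.span {q} : Ideal B).comap ι ≠ ⊥ := by
    intro h
    have h1 := hec (Ideal.span {q})
    rw [h, Ideal.map_bot] at h1
    exact hq0 (by simpa [Ideal.span_eq_bot] using h1.symm)
  obtain ⟨s, hsJ, hs0⟩ := Submodule.exists_mem_ne_zero_of_ne_bot hJ
  obtain ⟨f, hfp, hfa⟩ := UniqueFactorizationMonoid.exists_prime_factors s hs0
  have hdvd : q ∣ ι s := Ideal.mem_span_singleton.mp (Ideal.mem_comap.mp hsJ)
  have hdvd2 : q ∣ (f.map ι).prod := by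
    have h1 : (s : S) ∣ f.prod := hfa.symm.dvd
    have h2 : ι s ∣ ι f.prod := map_dvd ι h1
    rw [map_multiset_prod] at h2
    exact dvd_trans hdvd h2
  obtain ⟨p, hpf, hqp⟩ := irred_assoc_of_dvd_prod hq (f.map ι)
    (fun x hx => by
      obtain ⟨y, hy, rfl⟩ := Multiset.mem_map.mp hx
      exact hpe y (hfp y hy)) hdvd2
  obtain ⟨y, hy, rfl⟩ := Multiset.mem_map.mp hpf
  exact hqp.symm.prime (hpe y (hfp y hy))
end

section
/- Let (T,M) be a complete local Noetherian ring, and suppose (S, S ∩ M) and (B, B ∩ M) are Noetherian local domains with S ⊆ B ⊆ T, both with completion T, such that every ideal of B is extended from S. If S has countable prime spectrum, then B has countable prime spectrum. -/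
/-- If `S ⊆ B ⊆ T` are Noetherian local domains with common completion `T`, every ideal
of `B` is extended from `S`, and `Spec S` is countable, then `Spec B` is countable. -/
theorem stmt7 {T : Type*} [CommRing T] [IsNoetherianRing T] [IsLocalRing T]
    (M : Ideal T) (hM : M = IsLocalRing.maximalIdeal T)
    (S B : Subring T) (hSB : S ≤ B)
    [IsDomain S] [IsNoetherianRing S] [IsLocalRing S]
    [IsDomain B] [IsNoetherianRing B] [IsLocalRing B]
    (hSmax : IsLocalRing.maximalIdeal S = M.comap S.subtype)
    (hBmax : IsLocalRing.maximalIdeal B = M.comap B.subtype)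
    (hScomp : HasCompletion M S) (hBcomp : HasCompletion M B)
    (hext : ∀ I : Ideal B, ∃ G : Set B,
      G ⊆ Set.range (Subring.inclusion hSB) ∧ I = Ideal.span G)
    (hSspec : Countable (PrimeSpectrum S)) :
    Countable (PrimeSpectrum B) := by
  classical
  set f := Subring.inclusion hSB
  have key : ∀ I : Ideal B, I = Ideal.map f (I.comap f) := by
    intro I
    refine le_antisymm ?_ Ideal.map_comap_le
    obtain ⟨G, hG, hIG⟩ := hext I
    rw [hIG]
    rw [Ideal.span_le]
    intro g hg
    obtain ⟨s, rfl⟩ := hG hg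
    exact Ideal.mem_map_of_mem f (Ideal.mem_comap.mpr (Ideal.subset_span hg))
  have hinj : Function.Injective (fun P : PrimeSpectrum B => P.comap f) := by
    intro P Q h
    ext1
    rw [key P.asIdeal, key Q.asIdeal]
    have : P.asIdeal.comap f = Q.asIdeal.comap f := congrArg PrimeSpectrum.asIdeal h
    rw [this]
  exact Function.Injective.countable hinj
end

section
/- Let (T,M) be a complete local Noetherian ring, and suppose (S, S ∩ M) and (B, B ∩ M) are Noetherian local domains with S ⊆ B ⊆ T, both with completion T, such that every ideal of B is extended from S. If S is noncatenary, then B is noncatenary. -/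
set_option maxHeartbeats 1000000
set_option synthInstance.maxHeartbeats 400000


/-- A chain of primes is saturated if no prime can be inserted strictly between two
consecutive members. -/
def IsSaturatedChain {R : Type*} [CommRing R] (c : LTSeries (PrimeSpectrum R)) : Prop :=
  ∀ i : Fin c.length, ∀ I : PrimeSpectrum R, ¬(c i.castSucc < I ∧ I < c i.succ)

/-- A commutative ring is catenary if for every pair of primes `P ⊆ Q`, all saturated
chains of primes from `P` to `Q` have the same length. -/
def IsCatenary (R : Type*) [CommRing R] : Prop :=
  ∀ c₁ c₂ : LTSeries (PrimeSpectrum R), c₁.head = c₂.head → c₁.last = c₂.last →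
    IsSaturatedChain c₁ → IsSaturatedChain c₂ → c₁.length = c₂.length

section FlatAux

variable {T : Type*} [CommRing T] (M : Ideal T) (S : Subring T)

theorem flat_of_hasCompletion [IsNoetherianRing S] (hS : HasCompletion M S) :
    Module.Flat S T := by
  set I : Ideal S := M.comap S.subtype with hI
  let κ : ∀ n : ℕ, (S ⧸ I ^ n) ≃+* (T ⧸ M ^ n) :=
    fun n => RingEquiv.ofBijective _ (hS.2 n)
  have κ_mk : ∀ (n : ℕ) (s : S),
      κ n (Ideal.Quotient.mk (I ^ n) s) = Ideal.Quotient.mk (M ^ n) (s : T) :=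
    fun n s => Ideal.quotientMap_mk (J := I ^ n) (I := M ^ n) (f := S.subtype)
      (H := pow_comap_le_comap_pow _ M n) (x := s)
  have hIn : ∀ n : ℕ, (I ^ n : Ideal S) = (I ^ n • ⊤ : Submodule S S) :=
    fun n => by rw [smul_eq_mul, Ideal.mul_top]
  let q : ∀ n : ℕ, (S ⧸ I ^ n) ≃ₗ[S] (S ⧸ (I ^ n • ⊤ : Submodule S S)) :=
    fun n => Submodule.quotEquivOfEq _ _ (hIn n)
  have approx : ∀ (n : ℕ) (t : T), ∃ s : S,
      Ideal.Quotient.mk (M ^ n) (s : T) = Ideal.Quotient.mk (M ^ n) t := by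
    intro n t
    obtain ⟨y, hy⟩ := (hS.2 n).2 (Ideal.Quotient.mk (M ^ n) t)
    obtain ⟨s, rfl⟩ := Ideal.Quotient.mk_surjective y
    exact ⟨s, hy⟩
  have symm_eq : ∀ (n : ℕ) (s : S) (t : T),
      Ideal.Quotient.mk (M ^ n) (s : T) = Ideal.Quotient.mk (M ^ n) t →
      (κ n).symm (Ideal.Quotient.mk (M ^ n) t) = Ideal.Quotient.mk (I ^ n) s := by
    intro n s t h
    rw [← h, ← κ_mk n s, RingEquiv.symm_apply_apply]
  let G : ∀ n : ℕ, T →ₗ[S] S ⧸ (I ^ n • ⊤ : Submodule S S) := fun n =>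
    { toFun := fun t => q n ((κ n).symm (Ideal.Quotient.mk (M ^ n) t))
      map_add' := by intro x y; simp only [map_add]
      map_smul' := by
        intro s t
        obtain ⟨s', hs'⟩ := approx n t
        have h1 : Ideal.Quotient.mk (M ^ n) (((s * s' : S) : T)) =
            Ideal.Quotient.mk (M ^ n) (s • t) := by
          have hst : (s • t : T) = (s : T) * t := rfl
          rw [hst]
          push_cast
          rw [map_mul, map_mul, hs']
        show q n ((κ n).symm (Ideal.Quotient.mk (M ^ n) (s • t))) =
          s • q n ((κ n).symm (Ideal.Quotient.mk (M ^ n) t))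
        rw [symm_eq n (s * s') (s • t) h1, symm_eq n s' t hs']
        show q n (Submodule.Quotient.mk (s * s')) = s • q n (Submodule.Quotient.mk s')
        rw [Submodule.quotEquivOfEq_mk, Submodule.quotEquivOfEq_mk, ← Submodule.Quotient.mk_smul]
        rfl }
  have Gval : ∀ (n : ℕ) (s : S) (t : T),
      Ideal.Quotient.mk (M ^ n) (s : T) = Ideal.Quotient.mk (M ^ n) t →
      G n t = Submodule.Quotient.mk s := by
    intro n s t h
    show q n ((κ n).symm (Ideal.Quotient.mk (M ^ n) t)) = _
    rw [symm_eq n s t h]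
    exact Submodule.quotEquivOfEq_mk _ _ _ s
  have compat : ∀ {m n : ℕ} (hmn : m ≤ n),
      AdicCompletion.transitionMap I S hmn ∘ₗ G n = G m := by
    intro m n hmn
    refine LinearMap.ext fun t => ?_
    obtain ⟨s, hs⟩ := approx n t
    have hsm : Ideal.Quotient.mk (M ^ m) (s : T) = Ideal.Quotient.mk (M ^ m) t := by
      rw [Ideal.Quotient.eq] at hs ⊢
      exact Ideal.pow_le_pow_right hmn hs
    rw [LinearMap.comp_apply, Gval n s t hs, Gval m s t hsm]
    exact (rfl : AdicCompletion.transitionMap I S hmn (Submodule.Quotient.mk s) = Submodule.Quotient.mk s)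
  let Φ : T →ₗ[S] AdicCompletion I S := AdicCompletion.lift I G compat
  have Φval : ∀ (t : T) (n : ℕ), (Φ t).val n = G n t := fun t n => rfl
  have hinj : Function.Injective Φ := by
    rw [injective_iff_map_eq_zero]
    intro t ht
    have hmem : ∀ n : ℕ, t ∈ (M ^ n : Ideal T) := by
      intro n
      have h0 : G n t = 0 := by rw [← Φval t n, ht]; rfl
      have h2 : (κ n).symm (Ideal.Quotient.mk (M ^ n) t) = 0 :=
        ((q n).map_eq_zero_iff).mp h0
      have h3 : Ideal.Quotient.mk (M ^ n) t = 0 :=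
        (RingEquiv.map_eq_zero_iff (κ n).symm).mp h2
      rwa [Ideal.Quotient.eq_zero_iff_mem] at h3
    have := hS.1.toIsHausdorff.haus t (fun n => by
      rw [SModEq.zero, smul_eq_mul, Ideal.mul_top]; exact hmem n)
    exact this
  have hsurj : Function.Surjective Φ := by
    intro x
    have hex : ∀ n : ℕ, ∃ s : S,
        (Submodule.Quotient.mk s : S ⧸ (I ^ n • ⊤ : Submodule S S)) = x.val n :=
      fun n => Submodule.Quotient.mk_surjective _ (x.val n)
    choose s hs using hex
    have hcauchy : ∀ {m n : ℕ}, m ≤ n →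
        ((s m : T)) ≡ ((s n : T)) [SMOD (M ^ m • ⊤ : Submodule T T)] := by
      intro m n hmn
      have h1 : AdicCompletion.transitionMap I S hmn (x.val n) = x.val m := x.2 hmn
      rw [← hs n, ← hs m, show ∀ y : S, AdicCompletion.transitionMap I S hmn (Submodule.Quotient.mk y) = Submodule.Quotient.mk y from fun _ => rfl] at h1
      have h2 : s n - s m ∈ (I ^ m • ⊤ : Submodule S S) :=
        (Submodule.Quotient.eq _).mp h1
      rw [← hIn m] at h2
      have h3 : ((s n : T)) - ((s m : T)) ∈ (M ^ m : Ideal T) := by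
        have h4 := pow_comap_le_comap_pow S.subtype M m h2
        rw [Ideal.mem_comap] at h4
        simpa using h4
      rw [SModEq.sub_mem, smul_eq_mul, Ideal.mul_top]
      exact (M ^ m).neg_mem_iff.mp (by simpa using h3)
    obtain ⟨L, hL⟩ := hS.1.toIsPrecomplete.prec (f := fun n => ((s n : T))) hcauchy
    refine ⟨L, AdicCompletion.ext fun n => ?_⟩
    have hmk : Ideal.Quotient.mk (M ^ n) ((s n : T)) = Ideal.Quotient.mk (M ^ n) L := by
      have := hL n
      rw [SModEq.sub_mem, smul_eq_mul, Ideal.mul_top] at this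
      exact Ideal.Quotient.eq.mpr this
    rw [Φval L n, Gval n (s n) L hmk]
    exact hs n
  have fl : Module.Flat S (AdicCompletion I S) :=
    AdicCompletion.flat_of_isNoetherian I
  exact Module.Flat.of_linearEquiv (LinearEquiv.ofBijective Φ ⟨hinj, hsurj⟩)

end FlatAux

section FFAux

variable {T : Type*} [CommRing T] (M : Ideal T) (S : Subring T)

theorem comap_map_self_of_ff (ff : Module.FaithfullyFlat S T) (P : Ideal S) (x : S)
    (hx : (x : T) ∈ P.map S.subtype) : x ∈ P := by
  haveI := ff
  have key : ∀ u ∈ P.map S.subtype, ∀ t : T,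
      (Submodule.Quotient.mk (1 : S) : S ⧸ (P : Submodule S S)) ⊗ₜ[S] (u * t) = 0 := by
    intro u hu
    rw [Ideal.map] at hu
    refine Submodule.span_induction ?_ ?_ ?_ ?_ hu
    · rintro u ⟨p, hp, rfl⟩ t
      have h1 : (S.subtype p) * t = p • t := rfl
      have hp0 : (Submodule.Quotient.mk p : S ⧸ (P : Submodule S S)) = 0 :=
        (Submodule.Quotient.mk_eq_zero _).mpr hp
      rw [h1, TensorProduct.tmul_smul, TensorProduct.smul_tmul',
        show p • (Submodule.Quotient.mk (1 : S) : S ⧸ (P : Submodule S S)) =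
          Submodule.Quotient.mk p from by
            rw [← Submodule.Quotient.mk_smul]; congr 1; simp,
        hp0, TensorProduct.zero_tmul]
    · intro t; rw [zero_mul, TensorProduct.tmul_zero]
    · intro u v hu hv ihu ihv t
      rw [add_mul, TensorProduct.tmul_add, ihu t, ihv t, add_zero]
    · intro a u hu ih t
      have : (a • u) * t = u * (a * t) := by
        rw [smul_eq_mul]; ring
      rw [this]
      exact ih (a * t)
  let f : S →ₗ[S] S ⧸ (P : Submodule S S) :=
    (P : Submodule S S).mkQ ∘ₗ LinearMap.toSpanSingleton S S x
  have hf : f = 0 := by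
    rw [Module.FaithfullyFlat.zero_iff_rTensor_zero S T]
    refine TensorProduct.ext' ?_
    intro s t
    rw [LinearMap.rTensor_tmul, LinearMap.zero_apply]
    show (Submodule.Quotient.mk (s • x) : S ⧸ (P : Submodule S S)) ⊗ₜ[S] t = 0
    have h1 : (Submodule.Quotient.mk (s • x) : S ⧸ (P : Submodule S S)) =
        (s * x) • (Submodule.Quotient.mk (1 : S)) := by
      rw [← Submodule.Quotient.mk_smul]; congr 1; simp [smul_eq_mul]
    rw [h1, TensorProduct.smul_tmul]
    have h2 : ((s * x : S) • t : T) = (x : T) * ((s : T) * t) := by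
      show ((s * x : S) : T) * t = _
      push_cast; ring
    rw [h2]
    exact key _ hx ((s : T) * t)
  have : (Submodule.Quotient.mk x : S ⧸ (P : Submodule S S)) = 0 := by
    have h3 := LinearMap.congr_fun hf 1
    simpa [f] using h3
  exact (Submodule.Quotient.mk_eq_zero _).mp this

theorem ff_of_flat_local [IsLocalRing S] (hflat : Module.Flat S T) (hMne : M ≠ ⊤)
    (hSmax : IsLocalRing.maximalIdeal S = M.comap S.subtype) :
    Module.FaithfullyFlat S T := by
  refine { toFlat := hflat, submodule_ne_top := ?_ }
  intro m hm h
  have hmeq : m = IsLocalRing.maximalIdeal S := IsLocalRing.eq_maximalIdeal hm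
  have hle : (m • (⊤ : Submodule S T)) ≤ M.restrictScalars S := by
    refine Submodule.smul_le.mpr ?_
    intro s hs t _
    have hsM : (s : T) ∈ M := by rw [hmeq, hSmax] at hs; exact hs
    exact M.mul_mem_right t hsM
  have h1 : (1 : T) ∈ M := hle (by rw [h]; trivial)
  exact hMne ((Ideal.eq_top_iff_one M).mpr h1)

theorem lies_over_of_ff (ff : Module.FaithfullyFlat S T) (P : Ideal S) [P.IsPrime] :
    ∃ q : Ideal T, q.IsPrime ∧ q.comap S.subtype = P := by
  have hdisj : Disjoint ((P.map S.subtype : Ideal T) : Set T)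
      ((P.primeCompl.map (S.subtype : ↥S →* T) : Submonoid T) : Set T) := by
    rw [Set.disjoint_left]
    rintro u hu ⟨s, hs, rfl⟩
    exact hs (comap_map_self_of_ff S ff P s hu)
  obtain ⟨q, hq, hle, hd⟩ := Ideal.exists_le_prime_disjoint _ _ hdisj
  refine ⟨q, hq, le_antisymm ?_ ?_⟩
  · intro s hs
    by_contra hsP
    exact (Set.disjoint_left.mp hd) hs ⟨s, hsP, rfl⟩
  · intro s hs
    exact hle (Ideal.mem_map_of_mem _ hs)

end FFAux

/-- If `S ⊆ B ⊆ T` are Noetherian local domains with common completion `T`, every ideal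
of `B` is extended from `S`, and `S` is noncatenary, then `B` is noncatenary. -/
theorem stmt8 {T : Type*} [CommRing T] [IsNoetherianRing T] [IsLocalRing T]
    (M : Ideal T) (hM : M = IsLocalRing.maximalIdeal T)
    (S B : Subring T) (hSB : S ≤ B)
    [IsDomain S] [IsNoetherianRing S] [IsLocalRing S]
    [IsDomain B] [IsNoetherianRing B] [IsLocalRing B]
    (hSmax : IsLocalRing.maximalIdeal S = M.comap S.subtype)
    (hBmax : IsLocalRing.maximalIdeal B = M.comap B.subtype)
    (hScomp : HasCompletion M S) (hBcomp : HasCompletion M B)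
    (hext : ∀ I : Ideal B, ∃ G : Set B,
      G ⊆ Set.range (Subring.inclusion hSB) ∧ I = Ideal.span G)
    (hSnoncat : ¬ IsCatenary S) :
    ¬ IsCatenary B := by
  intro hB
  apply hSnoncat
  have hMne : M ≠ ⊤ := hM ▸ (IsLocalRing.maximalIdeal.isMaximal T).ne_top
  have hflat : Module.Flat S T := flat_of_hasCompletion M S hScomp
  have ff : Module.FaithfullyFlat S T := ff_of_flat_local M S hflat hMne hSmax
  -- every ideal of B is the extension of its contraction
  have hBid : ∀ q : Ideal B,
      (q.comap (Subring.inclusion hSB)).map (Subring.inclusion hSB) = q := by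
    intro q
    obtain ⟨G, hG, hq⟩ := hext q
    refine le_antisymm Ideal.map_comap_le ?_
    conv_lhs => rw [hq]
    rw [Ideal.span_le]
    intro g hg
    obtain ⟨s, rfl⟩ := hG hg
    refine Ideal.mem_map_of_mem _ ?_
    rw [Ideal.mem_comap]
    exact hq ▸ Ideal.subset_span hg
  -- the contraction map on prime spectra
  let φ : PrimeSpectrum B → PrimeSpectrum S :=
    fun q => ⟨q.asIdeal.comap (Subring.inclusion hSB), inferInstance⟩
  have hinj : Function.Injective φ := by
    intro q₁ q₂ h
    have h' := congrArg PrimeSpectrum.asIdeal h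
    refine PrimeSpectrum.ext ?_
    rw [← hBid q₁.asIdeal, ← hBid q₂.asIdeal]
    exact congrArg _ h'
  have hsurj : Function.Surjective φ := by
    intro P
    obtain ⟨q, hq, hcomap⟩ := lies_over_of_ff S ff P.asIdeal
    haveI := hq
    refine ⟨⟨q.comap B.subtype, inferInstance⟩, ?_⟩
    refine PrimeSpectrum.ext ?_
    show (q.comap B.subtype).comap (Subring.inclusion hSB) = P.asIdeal
    rw [Ideal.comap_comap]
    exact hcomap
  have hmono : ∀ q₁ q₂ : PrimeSpectrum B, q₁ ≤ q₂ → φ q₁ ≤ φ q₂ := by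
    intro q₁ q₂ h
    rw [← PrimeSpectrum.asIdeal_le_asIdeal] at h ⊢
    exact Ideal.comap_mono h
  have hrefl : ∀ q₁ q₂ : PrimeSpectrum B, φ q₁ ≤ φ q₂ → q₁ ≤ q₂ := by
    intro q₁ q₂ h
    rw [← PrimeSpectrum.asIdeal_le_asIdeal] at h ⊢
    rw [← hBid q₁.asIdeal, ← hBid q₂.asIdeal]
    exact Ideal.map_mono h
  let e : PrimeSpectrum B ≃o PrimeSpectrum S :=
    { toEquiv := Equiv.ofBijective φ ⟨hinj, hsurj⟩
      map_rel_iff' := fun {a b} => ⟨hrefl a b, hmono a b⟩ }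
  -- transport chains
  intro c₁ c₂ hh hl hs1 hs2
  have sat : ∀ c : LTSeries (PrimeSpectrum S), IsSaturatedChain c →
      IsSaturatedChain (c.map e.symm e.symm.strictMono) := by
    intro c hc i I ⟨h1, h2⟩
    have hI : I = e.symm (e I) := (e.symm_apply_apply I).symm
    rw [hI] at h1 h2
    exact hc i (e I) ⟨e.symm.lt_iff_lt.mp h1, e.symm.lt_iff_lt.mp h2⟩
  have hlen := hB (c₁.map e.symm e.symm.strictMono) (c₂.map e.symm e.symm.strictMono)
    (by rw [LTSeries.head_map, LTSeries.head_map, hh])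
    (by rw [LTSeries.last_map, LTSeries.last_map, hl])
    (sat c₁ hs1) (sat c₂ hs2)
  simpa using hlen
end

section
/- Let (T,M) be a complete local Noetherian ring, (S, S ∩ M) ⊆ T a Noetherian local subring with completion T, and (B, B ∩ M) a quasi-local subring of T with S ⊆ B such that for every finitely generated ideal I of B, IT ∩ B = IB. Then B is Noetherian and the natural map from the (B ∩ M)-adic completion of B to T is an isomorphism. -/
set_option maxHeartbeats 1000000 in
/-- Proposition 2.5: if `S ⊆ B ⊆ T`, `S` is a Noetherian local ring with completion `T`,
`B` is quasi-local with maximal ideal `B ∩ M`, and `IT ∩ B = IB` for every finitely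
generated ideal `I` of `B`, then `B` is Noetherian and its completion is `T`. -/
theorem stmt10 {T : Type*} [CommRing T] [IsNoetherianRing T] [IsLocalRing T]
    (M : Ideal T) (hM : M = IsLocalRing.maximalIdeal T)
    (S : Subring T) [IsNoetherianRing S] [IsLocalRing S]
    (hSmax : IsLocalRing.maximalIdeal S = M.comap S.subtype)
    (hScomp : HasCompletion M S)
    (B : Subring T) (hSB : S ≤ B)
    (hBql : ∀ b : B, (b : T) ∉ M → IsUnit b)
    (hcontract : ∀ I : Ideal B, I.FG → (I.map B.subtype).comap B.subtype = I) :
    IsNoetherianRing B ∧ HasCompletion M B := by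
  classical
  set m : Ideal S := M.comap S.subtype with hm
  have hMne : M ≠ ⊤ := hM ▸ (IsLocalRing.maximalIdeal.isMaximal T).ne_top
  have hmTle : Ideal.map S.subtype m ≤ M := Ideal.map_le_iff_le_comap.mpr le_rfl
  -- surjectivity of the `S`-level maps, in usable form
  have hsurj : ∀ (n : ℕ) (t : T), ∃ s : S, (s : T) - t ∈ M ^ n := by
    intro n t
    obtain ⟨q, hq⟩ := (hScomp.2 n).2 (Ideal.Quotient.mk _ t)
    obtain ⟨s, rfl⟩ := Ideal.Quotient.mk_surjective q
    refine ⟨s, ?_⟩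
    rw [Ideal.quotientMap_mk] at hq
    exact Ideal.Quotient.eq.mp hq
  -- Step 1 : `M = m T`
  have hMn : ∀ n : ℕ, M ≤ Ideal.map S.subtype m ⊔ M ^ (n + 1) := by
    intro n
    induction n with
    | zero => simpa [pow_one] using (le_sup_right : M ≤ Ideal.map S.subtype m ⊔ M)
    | succ n ih =>
      intro x hx
      obtain ⟨y, hy, z, hz, rfl⟩ := Submodule.mem_sup.mp (ih hx)
      obtain ⟨s, hs⟩ := hsurj (n + 2) z
      have hsM : (s : T) ∈ M ^ (n + 1) := by
        have h1 : (s : T) = ((s : T) - z) + z := by ring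
        rw [h1]
        exact add_mem (Ideal.pow_le_pow_right (by omega) hs) hz
      have hsm : (s : T) ∈ Ideal.map S.subtype m := by
        refine Ideal.mem_map_of_mem S.subtype ?_
        show (s : T) ∈ M
        exact Ideal.pow_le_self (by omega) hsM
      refine Submodule.mem_sup.mpr ⟨y + s, add_mem hy hsm, z - s, ?_, by ring⟩
      simpa using neg_mem hs
  have hMeq : M = Ideal.map S.subtype m := by
    refine le_antisymm ?_ hmTle
    set π := Ideal.Quotient.mk (Ideal.map S.subtype m) with hπ
    have hmTne : Ideal.map S.subtype m ≠ ⊤ := fun h => hMne (top_le_iff.mp (h ▸ hmTle))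
    have : Nontrivial (T ⧸ Ideal.map S.subtype m) := Ideal.Quotient.nontrivial_iff.mpr hmTne
    have : IsLocalRing (T ⧸ Ideal.map S.subtype m) :=
      IsLocalRing.of_surjective' π Ideal.Quotient.mk_surjective
    have hbot : (⨅ i : ℕ, (M.map π) ^ i) = ⊥ := by
      apply Ideal.iInf_pow_eq_bot_of_isLocalRing
      intro h
      have h2 : (M.map π).comap π = ⊤ := by rw [h, Ideal.comap_top]
      rw [Ideal.comap_map_of_surjective π Ideal.Quotient.mk_surjective,
        ← RingHom.ker_eq_comap_bot, Ideal.mk_ker, sup_eq_left.mpr hmTle] at h2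
      exact hMne h2
    intro x hx
    have h0 : π x = 0 := by
      have hmem : π x ∈ ⨅ i : ℕ, (M.map π) ^ i := by
        rw [Submodule.mem_iInf]
        intro i
        cases i with
        | zero => simp
        | succ i =>
          obtain ⟨y, hy, z, hz, hxyz⟩ := Submodule.mem_sup.mp (hMn i hx)
          have hy0 : π y = 0 := Ideal.Quotient.eq_zero_iff_mem.mpr hy
          have : π x = π z := by rw [← hxyz, map_add, hy0, zero_add]
          rw [this, ← Ideal.map_pow]
          exact Ideal.mem_map_of_mem π hz
      rw [hbot] at hmem
      simpa using hmem
    exact Ideal.Quotient.eq_zero_iff_mem.mp h0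
  -- Step 2 : `B` is Noetherian
  have hNoeth : IsNoetherianRing B := by
    rw [isNoetherianRing_iff_ideal_fg]
    intro I
    obtain ⟨N, ⟨s, hsI, hN⟩, hmax⟩ :=
      set_has_maximal_iff_noetherian.mpr (inferInstance : IsNoetherian T T)
        {N : Ideal T | ∃ s : Finset B, ↑s ⊆ (I : Set B) ∧
          N = Ideal.map B.subtype (Ideal.span ↑s)}
        ⟨_, ∅, by simp, rfl⟩
    subst hN
    have hIle : Ideal.map B.subtype I ≤ Ideal.map B.subtype (Ideal.span (↑s : Set B)) := by
      rw [Ideal.map, Ideal.span_le]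
      rintro _ ⟨x, hxI, rfl⟩
      by_contra hx
      refine hmax (Ideal.map B.subtype (Ideal.span (↑(insert x s) : Set B)))
        ⟨insert x s, ?_, rfl⟩ ?_
      · intro y hy
        rcases Finset.mem_insert.mp (by exact_mod_cast hy) with h | h
        · exact h ▸ hxI
        · exact hsI h
      · refine lt_of_le_of_ne
          (Ideal.map_mono (Ideal.span_mono (by exact_mod_cast Finset.subset_insert x s))) ?_
        intro heq
        apply hx
        rw [heq]
        exact Ideal.mem_map_of_mem B.subtype
          (Ideal.subset_span (by exact_mod_cast Finset.mem_insert_self x s))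
    have hI0le : Ideal.span (↑s : Set B) ≤ I := Ideal.span_le.mpr hsI
    have hfg : (Ideal.span (↑s : Set B)).FG := ⟨s, rfl⟩
    have hIeq : I = Ideal.span (↑s : Set B) := by
      refine le_antisymm ?_ hI0le
      calc I ≤ (Ideal.map B.subtype I).comap B.subtype := Ideal.le_comap_map
        _ ≤ (Ideal.map B.subtype (Ideal.span (↑s : Set B))).comap B.subtype :=
          Ideal.comap_mono hIle
        _ = Ideal.span (↑s : Set B) := hcontract _ hfg
    exact ⟨s, hIeq.symm⟩
  refine ⟨hNoeth, hScomp.1, fun n => ?_⟩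
  -- Step 3 : completion of `B` is `T`
  set J : Ideal B := Ideal.map (Subring.inclusion hSB) m with hJ
  have hcomp : B.subtype.comp (Subring.inclusion hSB) = S.subtype := RingHom.ext fun x => rfl
  have hJmap : Ideal.map B.subtype J = M := by
    rw [hJ, Ideal.map_map, hcomp, ← hMeq]
  have hJle : J ≤ M.comap B.subtype := Ideal.map_le_iff_le_comap.mp hJmap.le
  have hkey : (M ^ n).comap B.subtype ≤ (M.comap B.subtype) ^ n := by
    have h1 : Ideal.map B.subtype (J ^ n) = M ^ n := by rw [Ideal.map_pow, hJmap]
    have h2 : (M ^ n).comap B.subtype = J ^ n := by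
      rw [← h1]
      exact hcontract _ ((isNoetherianRing_iff_ideal_fg B).mp hNoeth _)
    rw [h2]
    exact Ideal.pow_right_mono hJle n
  constructor
  · exact Ideal.quotientMap_injective' hkey
  · intro y
    obtain ⟨t, rfl⟩ := Ideal.Quotient.mk_surjective y
    obtain ⟨s, hs⟩ := hsurj n t
    refine ⟨Ideal.Quotient.mk _ (⟨(s : T), hSB s.2⟩ : B), ?_⟩
    rw [Ideal.quotientMap_mk]
    exact Ideal.Quotient.eq.mpr hs
end

section
/- Let (T,M) be a complete local Noetherian ring with dim T ≥ 1, and let P be a nonmaximal prime ideal of T. Then |T/P| = |T| and this cardinality is at least the cardinality of the continuum. -/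
open Cardinal IsLocalRing

lemma smod_top_iff' {R : Type*} [CommRing R] (I : Ideal R) (x y : R) :
    x ≡ y [SMOD (I • ⊤ : Ideal R)] ↔ x - y ∈ I := by
  rw [SModEq.sub_mem, smul_eq_mul, Ideal.mul_top]

lemma isPrecomplete_quotient {T : Type*} [CommRing T] (M P : Ideal T)
    (h : IsPrecomplete M T) :
    IsPrecomplete (M.map (Ideal.Quotient.mk P)) (T ⧸ P) := by
  constructor
  intro f hf
  have hd : ∀ n : ℕ, ∃ d : T, d ∈ M ^ n ∧ Ideal.Quotient.mk P d = f (n + 1) - f n := by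
    intro n
    have h1 : f n - f (n + 1) ∈ (M.map (Ideal.Quotient.mk P)) ^ n := by
      have := hf (Nat.le_succ n)
      rwa [smod_top_iff'] at this
    rw [← Ideal.map_pow] at h1
    obtain ⟨x, hx, hx2⟩ := Ideal.mem_map_iff_of_surjective _ Ideal.Quotient.mk_surjective |>.1 h1
    exact ⟨-x, neg_mem hx, by rw [map_neg, hx2]; ring⟩
  choose d hd1 hd2 using hd
  obtain ⟨g0, hg0⟩ := Ideal.Quotient.mk_surjective (f 0)
  set g : ℕ → T := fun n => Nat.rec g0 (fun k gk => gk + d k) n with hg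
  have hmk : ∀ n, Ideal.Quotient.mk P (g n) = f n := by
    intro n; induction n with
    | zero => exact hg0
    | succ k ih => show Ideal.Quotient.mk P (g k + d k) = _
                   rw [map_add, ih, hd2]; ring
  have hcoh : ∀ m n : ℕ, m ≤ n → g n - g m ∈ M ^ m := by
    intro m n hmn
    induction n, hmn using Nat.le_induction with
    | base => simp
    | succ k hk ih =>
      have : g (k + 1) - g m = (g k - g m) + d k := by show g k + d k - g m = _; ring
      rw [this]
      exact add_mem ih (Ideal.pow_le_pow_right hk (hd1 k))
  obtain ⟨L, hL⟩ := h.prec (f := g) (by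
    intro m n hmn
    rw [smod_top_iff']
    simpa using neg_mem (hcoh m n hmn))
  refine ⟨Ideal.Quotient.mk P L, fun n => ?_⟩
  rw [smod_top_iff', ← hmk, ← map_sub, ← Ideal.map_pow]
  have := (smod_top_iff' _ _ _).1 (hL n)
  exact Ideal.mem_map_of_mem _ this

lemma lower_bound {R : Type*} [CommRing R] [IsLocalRing R]
    (hpre : IsPrecomplete (maximalIdeal R) R)
    (hstrict : ∀ n : ℕ, ∃ x, x ∈ (maximalIdeal R) ^ n ∧ x ∉ (maximalIdeal R) ^ (n + 1)) :
    (#(R ⧸ maximalIdeal R)) ^ (ℵ₀ : Cardinal) ≤ #R := by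
  set N := maximalIdeal R with hN
  choose x hx1 hx2 using hstrict
  choose σ hσ using Ideal.Quotient.mk_surjective (I := N)
  set S : (ℕ → R ⧸ N) → ℕ → R := fun a m => ∑ k ∈ Finset.range m, σ (a k) * x k with hS
  have hcoh : ∀ (a : ℕ → R ⧸ N) (m n : ℕ), m ≤ n → S a n - S a m ∈ N ^ m := by
    intro a m n hmn
    rw [hS]
    simp only
    rw [← Finset.sum_Ico_eq_sub _ hmn]
    refine Ideal.sum_mem _ (fun k hk => ?_)
    exact Ideal.mul_mem_left _ _ (Ideal.pow_le_pow_right (Finset.mem_Ico.1 hk).1 (hx1 k))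
  have hlim : ∀ a : ℕ → R ⧸ N, ∃ L, ∀ n, S a n ≡ L [SMOD (N ^ n • ⊤ : Ideal R)] := by
    intro a
    refine hpre.prec (fun {m n} hmn => ?_)
    rw [smod_top_iff']
    simpa using neg_mem (hcoh a m n hmn)
  choose F hF using hlim
  have hinj : Function.Injective F := by
    intro a b hab
    classical
    by_contra hne
    have hex : ∃ k, a k ≠ b k := Function.ne_iff.1 hne
    set n := Nat.find hex with hn
    have hne_n : a n ≠ b n := Nat.find_spec hex
    have heq_lt : ∀ k, k < n → a k = b k := fun k hk => by
      by_contra hc; exact Nat.find_min hex hk hc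
    have h1 : S a (n + 1) - F a ∈ N ^ (n + 1) := (smod_top_iff' _ _ _).1 (hF a (n + 1))
    have h2 : S b (n + 1) - F b ∈ N ^ (n + 1) := (smod_top_iff' _ _ _).1 (hF b (n + 1))
    have h3 : S a (n + 1) - S b (n + 1) ∈ N ^ (n + 1) := by
      have := sub_mem h1 h2
      rw [hab] at this
      simpa using this
    have h4 : S a (n + 1) - S b (n + 1) = (σ (a n) - σ (b n)) * x n := by
      rw [hS]; simp only
      rw [← Finset.sum_sub_distrib]
      rw [Finset.sum_range_succ]
      have : ∀ k ∈ Finset.range n, σ (a k) * x k - σ (b k) * x k = 0 := by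
        intro k hk
        rw [heq_lt k (Finset.mem_range.1 hk)]; ring
      rw [Finset.sum_eq_zero this]
      ring
    rw [h4] at h3
    have hu : IsUnit (σ (a n) - σ (b n)) := by
      by_contra hnu
      have : σ (a n) - σ (b n) ∈ N := by
        rw [hN]; exact hnu
      have : a n - b n = 0 := by
        rw [← hσ (a n), ← hσ (b n), ← map_sub]
        exact Ideal.Quotient.eq_zero_iff_mem.2 this
      exact hne_n (by rwa [sub_eq_zero] at this)
    have : x n ∈ N ^ (n + 1) := by
      have h5 : ↑hu.unit⁻¹ * ((σ (a n) - σ (b n)) * x n) ∈ N ^ (n + 1) :=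
        Ideal.mul_mem_left _ _ h3
      rwa [← mul_assoc, IsUnit.val_inv_mul, one_mul] at h5
    exact hx2 n this
  have harr : #(ℕ → R ⧸ N) = (#(R ⧸ N)) ^ (ℵ₀ : Cardinal) := by
    simp [Cardinal.mk_arrow, Cardinal.lift_uzero, Cardinal.mk_nat, Cardinal.lift_aleph0]
  rw [← harr]
  exact Cardinal.mk_le_of_injective hinj

lemma quot_pow_card {R : Type*} [CommRing R] [IsNoetherianRing R] (N : Ideal R) (n : ℕ) :
    #(R ⧸ N ^ n) ≤ max ℵ₀ #(R ⧸ N) := by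
  induction n with
  | zero =>
    have : Subsingleton (R ⧸ N ^ 0) := by
      rw [pow_zero, Ideal.one_eq_top]
      exact Ideal.Quotient.subsingleton_iff.2 rfl
    exact le_max_of_le_left ((Cardinal.le_one_iff_subsingleton.2 this).trans Cardinal.one_le_aleph0)
  | succ n ih =>
    -- generators of N ^ n
    obtain ⟨d, g, hg⟩ := Submodule.fg_iff_exists_fin_generating_family.1
      (IsNoetherian.noetherian (N ^ n))
    choose σ1 hσ1 using Ideal.Quotient.mk_surjective (I := N)
    choose σn hσn using Ideal.Quotient.mk_surjective (I := N ^ n)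
    set Φ : (Fin d → R ⧸ N) × (R ⧸ N ^ n) → R ⧸ N ^ (n + 1) :=
      fun p => Ideal.Quotient.mk _ (σn p.2 + ∑ i, σ1 (p.1 i) * g i) with hΦ
    have hsurj : Function.Surjective Φ := by
      intro y
      obtain ⟨z, hz⟩ := Ideal.Quotient.mk_surjective y
      set b := Ideal.Quotient.mk (N ^ n) z with hb
      have hzb : z - σn b ∈ N ^ n := by
        rw [← Ideal.Quotient.eq]
        rw [hσn]
      rw [← hg] at hzb
      obtain ⟨c, hc⟩ := (Submodule.mem_span_range_iff_exists_fun R).1 hzb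
      refine ⟨⟨fun i => Ideal.Quotient.mk N (c i), b⟩, ?_⟩
      rw [hΦ]
      simp only
      rw [← hz]
      rw [Ideal.Quotient.eq]
      have : σn b + ∑ i, σ1 (Ideal.Quotient.mk N (c i)) * g i - z
          = ∑ i, (σ1 (Ideal.Quotient.mk N (c i)) - c i) * g i := by
        have h1 : ∑ i, (σ1 (Ideal.Quotient.mk N (c i)) - c i) * g i
            = ∑ i, σ1 (Ideal.Quotient.mk N (c i)) * g i - ∑ i, c i * g i := by
          rw [← Finset.sum_sub_distrib]
          exact Finset.sum_congr rfl (fun i _ => by ring)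
        rw [h1]
        have h2 : ∑ i, c i * g i = z - σn b := by
          rw [← hc]; exact Finset.sum_congr rfl (fun i _ => (smul_eq_mul (α := R) ..).symm ▸ rfl)
        rw [h2]; ring
      rw [this]
      refine Ideal.sum_mem _ (fun i _ => ?_)
      rw [pow_succ']
      have hgi : g i ∈ N ^ n := by
        rw [← hg]; exact Submodule.subset_span ⟨i, rfl⟩
      have hci : σ1 (Ideal.Quotient.mk N (c i)) - c i ∈ N := by
        rw [← Ideal.Quotient.eq, hσ1]
      exact Ideal.mul_mem_mul hci hgi
    have hcard : #(R ⧸ N ^ (n + 1)) ≤ #((Fin d → R ⧸ N) × (R ⧸ N ^ n)) :=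
      Cardinal.mk_le_of_surjective hsurj
    have h1 : #((Fin d → R ⧸ N) × (R ⧸ N ^ n)) = #(Fin d → R ⧸ N) * #(R ⧸ N ^ n) :=
      (Cardinal.mk_prod _ _).trans (by simp)
    have h2 : #(Fin d → R ⧸ N) ≤ max ℵ₀ #(R ⧸ N) := by
      have : #(Fin d → R ⧸ N) = #(R ⧸ N) ^ (d : Cardinal) := by
        simp [Cardinal.mk_arrow]
      rw [this]
      calc #(R ⧸ N) ^ (d : Cardinal) ≤ (max ℵ₀ #(R ⧸ N)) ^ (d : Cardinal) :=
            Cardinal.power_le_power_right (le_max_right _ _)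
        _ ≤ max ℵ₀ #(R ⧸ N) := Cardinal.power_nat_le (le_max_left _ _)
    calc #(R ⧸ N ^ (n + 1)) ≤ #(Fin d → R ⧸ N) * #(R ⧸ N ^ n) := h1 ▸ hcard
      _ ≤ max ℵ₀ #(R ⧸ N) * max ℵ₀ #(R ⧸ N) := mul_le_mul' h2 ih
      _ = max ℵ₀ #(R ⧸ N) := Cardinal.mul_eq_self (le_max_left _ _)

lemma upper_bound {R : Type*} [CommRing R] [IsNoetherianRing R] (N : Ideal R)
    (hh : IsHausdorff N R) :
    Cardinal.mk R ≤ (max ℵ₀ #(R ⧸ N)) ^ (ℵ₀ : Cardinal) := by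
  set f : R → ∀ n : ℕ, R ⧸ N ^ n := fun r n => Ideal.Quotient.mk (N ^ n) r with hf
  have hinj : Function.Injective f := by
    intro r s hrs
    have : r - s = 0 := by
      refine hh.haus (r - s) (fun n => ?_)
      rw [SModEq.sub_mem, smul_eq_mul, Ideal.mul_top, sub_zero, ← Ideal.Quotient.eq_zero_iff_mem,
        map_sub, sub_eq_zero]
      exact congrFun hrs n
    rwa [sub_eq_zero] at this
  calc #R ≤ #(∀ n : ℕ, R ⧸ N ^ n) := Cardinal.mk_le_of_injective hinj
    _ = Cardinal.prod (fun n : ℕ => #(R ⧸ N ^ n)) := Cardinal.mk_pi _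
    _ ≤ Cardinal.prod (fun _ : ℕ => max ℵ₀ #(R ⧸ N)) :=
        Cardinal.prod_le_prod _ _ (fun n => quot_pow_card N n)
    _ = (max ℵ₀ #(R ⧸ N)) ^ (ℵ₀ : Cardinal) := by
        rw [Cardinal.prod_const]
        simp

/-- Lemma 2.2 of Dundon et al.: if `(T, M)` is a complete local ring of dimension at
least one and `P` is a nonmaximal prime of `T`, then `|T/P| = |T| ≥ 𝔠`. -/
theorem stmt12 {T : Type*} [CommRing T] [IsNoetherianRing T] [IsLocalRing T]
    (M : Ideal T) (hM : M = IsLocalRing.maximalIdeal T)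
    (hTcomplete : IsAdicComplete M T)
    (hdim : 1 ≤ ringKrullDim T)
    (P : Ideal T) (hP : P.IsPrime) (hPM : P ≠ M) :
    Cardinal.mk (T ⧸ P) = Cardinal.mk T ∧ Cardinal.continuum ≤ Cardinal.mk T := by
  haveI := hP
  haveI : Nontrivial (T ⧸ P) := Ideal.Quotient.nontrivial_iff.mpr hP.ne_top
  haveI : IsLocalRing (T ⧸ P) :=
    IsLocalRing.of_surjective' (Ideal.Quotient.mk P) Ideal.Quotient.mk_surjective
  have hPleM : P ≤ M := hM ▸ IsLocalRing.le_maximalIdeal hP.ne_top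
  have hMmax : M.IsMaximal := hM ▸ IsLocalRing.maximalIdeal.isMaximal T
  have hmapne : M.map (Ideal.Quotient.mk P) ≠ ⊤ := by
    intro htop
    have h1 : (1 : T ⧸ P) ∈ M.map (Ideal.Quotient.mk P) := htop ▸ Submodule.mem_top
    obtain ⟨x, hx, hx1⟩ :=
      (Ideal.mem_map_iff_of_surjective _ Ideal.Quotient.mk_surjective).1 h1
    have : (1 : T) - x ∈ P := by
      rw [← Ideal.Quotient.eq_zero_iff_mem, map_sub, hx1, map_one, sub_self]
    have hone : (1 : T) ∈ M := by
      have := add_mem (hPleM this) hx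
      simpa using this
    exact hMmax.ne_top (Ideal.eq_top_of_isUnit_mem _ hone isUnit_one)
  have hmapmax : (M.map (Ideal.Quotient.mk P)).IsMaximal :=
    (Ideal.map_eq_top_or_isMaximal_of_surjective _ Ideal.Quotient.mk_surjective
      hMmax).resolve_left hmapne
  have hN' : maximalIdeal (T ⧸ P) = M.map (Ideal.Quotient.mk P) :=
    (IsLocalRing.eq_maximalIdeal hmapmax).symm
  have hres : #((T ⧸ P) ⧸ maximalIdeal (T ⧸ P)) = #(T ⧸ M) := by
    rw [hN']
    exact Cardinal.mk_congr (DoubleQuot.quotQuotEquivQuotOfLE hPleM).toEquiv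
  have hNbot : maximalIdeal (T ⧸ P) ≠ ⊥ := by
    intro hbot
    have hMP : M ≤ P := by
      intro x hx
      have hmem : Ideal.Quotient.mk P x ∈ M.map (Ideal.Quotient.mk P) :=
        Ideal.mem_map_of_mem _ hx
      rw [← hN', hbot] at hmem
      exact Ideal.Quotient.eq_zero_iff_mem.1 ((Submodule.mem_bot _).1 hmem)
    exact hPM (le_antisymm hPleM hMP)
  obtain ⟨a, haN, ha0⟩ := Submodule.exists_mem_ne_zero_of_ne_bot hNbot
  have hstrict : ∀ n : ℕ, ∃ x, x ∈ (maximalIdeal (T ⧸ P)) ^ n ∧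
      x ∉ (maximalIdeal (T ⧸ P)) ^ (n + 1) := by
    intro n
    by_contra hc
    push_neg at hc
    have heq : (maximalIdeal (T ⧸ P)) ^ n = (maximalIdeal (T ⧸ P)) ^ (n + 1) :=
      le_antisymm (fun x hx => hc x hx) (Ideal.pow_le_pow_right (Nat.le_succ n))
    have hall : ∀ k : ℕ, (maximalIdeal (T ⧸ P)) ^ (n + k) = (maximalIdeal (T ⧸ P)) ^ n := by
      intro k; induction k with
      | zero => rfl
      | succ k ih =>
        have : n + (k + 1) = (n + k) + 1 := by omega
        rw [this, pow_succ, ih, ← pow_succ, ← heq]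
    have hbot : (maximalIdeal (T ⧸ P)) ^ n = ⊥ := by
      have hinf := Ideal.iInf_pow_eq_bot_of_isDomain
        (I := maximalIdeal (T ⧸ P)) (Ideal.IsMaximal.ne_top inferInstance)
      rw [← hinf]
      refine le_antisymm (le_iInf fun m => ?_) (iInf_le _ n)
      rcases le_or_gt m n with h | h
      · exact Ideal.pow_le_pow_right h
      · have hm : n + (m - n) = m := by omega
        rw [← hm, hall]
    have hpow : a ^ n = 0 := by
      have := Ideal.pow_mem_pow haN n
      rwa [hbot, Submodule.mem_bot] at this
    rcases Nat.eq_zero_or_pos n with rfl | hn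
    · simp at hpow
    · exact ha0 (pow_eq_zero_iff hn.ne' |>.1 hpow)
  -- lower bound for `T ⧸ P`
  have hpre : IsPrecomplete (maximalIdeal (T ⧸ P)) (T ⧸ P) := by
    rw [hN']; exact isPrecomplete_quotient M P hTcomplete.toIsPrecomplete
  have hlow := lower_bound hpre hstrict
  rw [hres] at hlow
  -- upper bound for `T`
  have hup := upper_bound M hTcomplete.toIsHausdorff
  set κ := #(T ⧸ M) with hκ
  have hκ2 : (2 : Cardinal) ≤ κ := by
    haveI : Nontrivial (T ⧸ M) := Ideal.Quotient.nontrivial_iff.mpr hMmax.ne_top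
    obtain ⟨x, y, hxy⟩ := exists_pair_ne (T ⧸ M)
    exact Cardinal.two_le_iff.2 ⟨x, y, hxy⟩
  have hcont : Cardinal.continuum ≤ κ ^ (ℵ₀ : Cardinal) := by
    rw [← Cardinal.two_power_aleph0]
    exact Cardinal.power_le_power_right hκ2
  have hmaxle : max ℵ₀ κ ≤ κ ^ (ℵ₀ : Cardinal) := by
    refine max_le (Cardinal.aleph0_le_continuum.trans hcont) ?_
    exact Cardinal.self_le_power κ Cardinal.one_le_aleph0
  have hup2 : #T ≤ κ ^ (ℵ₀ : Cardinal) := by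
    refine hup.trans ?_
    calc (max ℵ₀ κ) ^ (ℵ₀ : Cardinal)
        ≤ (κ ^ (ℵ₀ : Cardinal)) ^ (ℵ₀ : Cardinal) := Cardinal.power_le_power_right hmaxle
      _ = κ ^ ((ℵ₀ : Cardinal) * ℵ₀) := (Cardinal.power_mul).symm
      _ = κ ^ (ℵ₀ : Cardinal) := by rw [Cardinal.aleph0_mul_aleph0]
  have hTquot : #(T ⧸ P) ≤ #T :=
    Cardinal.mk_le_of_surjective (Ideal.Quotient.mk_surjective (I := P))
  refine ⟨le_antisymm hTquot (hup2.trans hlow), ?_⟩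
  exact hcont.trans (hlow.trans hTquot)
end

section
/- Let (T,M) be a complete local Noetherian ring and (A, A ∩ M) a Noetherian local subring with completion T. If T/M is uncountable, then A is uncountable. -/
/-- If `(A, A ∩ M)` is a Noetherian local subring of the complete local ring `(T, M)`
with completion `T` and `T/M` is uncountable, then `A` is uncountable. -/
theorem stmt18 {T : Type*} [CommRing T] [IsNoetherianRing T] [IsLocalRing T]
    (M : Ideal T) (hM : M = IsLocalRing.maximalIdeal T)
    (A : Subring T) [IsNoetherianRing A] [IsLocalRing A]
    (hAmax : IsLocalRing.maximalIdeal A = M.comap A.subtype)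
    (hAcomp : HasCompletion M A)
    (hTM : Uncountable (T ⧸ M)) :
    Uncountable A := by
  have h1 := (hAcomp.2 1).2
  -- composite surjection A → T ⧸ M ^ 1
  have hsurj : Function.Surjective
      (fun a : A => Ideal.quotientMap (M ^ 1) A.subtype (pow_comap_le_comap_pow _ M 1)
        (Ideal.Quotient.mk _ a)) :=
    h1.comp Ideal.Quotient.mk_surjective
  have : Uncountable (T ⧸ M ^ 1) :=
    ((Ideal.quotEquivOfEq (pow_one M)).symm.injective).uncountable
  exact hsurj.uncountable
end
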